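/- arXiv:0909.0799 — 3 statements merged into one kernel-verified Lean document; each statement's English description precedes it below -/
import Mathlib

section
/- Let D be a Dedekind domain such that D has characteristic 0 or the unit group D* is infinite. Then every subgroup H of finite index in SL₂(D) has non-zero level; that is, there exists a nonzero ideal 𝔮 of D such that T(r) belongs to the normal core of H in SL₂(D) for every r ∈ 𝔮. -/
open Matrix

/-- The translation matrix `T(r) = [[1, r], [0, 1]]` in `SL₂(R)`. -/
def Tm (R : Type*) [CommRing R] (r : R) : Matrix.SpecialLinearGroup (Fin 2) R :=
  ⟨!![1, r; 0, 1], by simp [Matrix.det_fin_two_of]⟩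

/-- The principal congruence subgroup `SL₂(R, 𝔮)`, the kernel of reduction mod `𝔮`. -/
def SLmod (R : Type*) [CommRing R] (q : Ideal R) :
    Subgroup (Matrix.SpecialLinearGroup (Fin 2) R) :=
  (Matrix.SpecialLinearGroup.map (Ideal.Quotient.mk q)).ker

/-- `H` is a congruence subgroup: it contains a principal congruence subgroup of
nonzero level. -/
def IsCongruence {R : Type*} [CommRing R]
    (H : Subgroup (Matrix.SpecialLinearGroup (Fin 2) R)) : Prop :=
  ∃ q : Ideal R, q ≠ ⊥ ∧ SLmod R q ≤ H

/-- `q` is the level `l(H)` of `H`: the largest ideal all of whose associated translations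
lie in the normal core of `H` (equivalently, the largest ideal contained in the
quasi-level of `H`). -/
def IsLevel {R : Type*} [CommRing R]
    (H : Subgroup (Matrix.SpecialLinearGroup (Fin 2) R)) (q : Ideal R) : Prop :=
  (∀ r ∈ q, Tm R r ∈ H.normalCore) ∧
    ∀ I : Ideal R, (∀ r ∈ I, Tm R r ∈ H.normalCore) → I ≤ q

section Helpers
variable {R : Type*} [CommRing R]


lemma Tm_mul (r s : R) : Tm R r * Tm R s = Tm R (r + s) := by
  apply Subtype.ext
  show (!![1, r; 0, 1] : Matrix (Fin 2) (Fin 2) R) * !![1, s; 0, 1] = _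
  ext i j
  fin_cases i <;> fin_cases j <;> simp [Tm, Matrix.mul_apply, Fin.sum_univ_two] <;> ring

lemma Tm_zero : Tm R 0 = 1 := by
  apply Subtype.ext
  show (!![1, (0:R); 0, 1]) = (1 : Matrix (Fin 2) (Fin 2) R)
  ext i j
  fin_cases i <;> fin_cases j <;> simp [Matrix.one_apply]

lemma Tm_inv (r : R) : (Tm R r)⁻¹ = Tm R (-r) := by
  apply inv_eq_of_mul_eq_one_right
  rw [Tm_mul, add_neg_cancel, Tm_zero]

lemma Tm_pow (n : ℕ) (r : R) : Tm R r ^ n = Tm R (n * r) := by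
  induction n with
  | zero => simp [Tm_zero]
  | succ k ih => rw [pow_succ, ih, Tm_mul]; congr 1; push_cast; ring

def Dm (u : Rˣ) : Matrix.SpecialLinearGroup (Fin 2) R :=
  ⟨!![(u:R), 0; 0, ((u⁻¹:Rˣ):R)], by simp [Matrix.det_fin_two_of]⟩

lemma Dm_mul (u v : Rˣ) : Dm u * Dm v = Dm (u * v) := by
  apply Subtype.ext
  show (!![(u:R), 0; 0, _] * !![(v:R), 0; 0, _]) = _
  ext i j
  fin_cases i <;> fin_cases j <;> simp [Dm, Matrix.mul_apply, Fin.sum_univ_two] <;> ring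

lemma Dm_one : Dm (1 : Rˣ) = 1 := by
  apply Subtype.ext
  show (!![(1:R), 0; 0, _]) = (1 : Matrix (Fin 2) (Fin 2) R)
  ext i j
  fin_cases i <;> fin_cases j <;> simp [Matrix.one_apply]

lemma Dm_inv (u : Rˣ) : (Dm u)⁻¹ = Dm u⁻¹ := by
  apply inv_eq_of_mul_eq_one_right
  rw [Dm_mul, mul_inv_cancel, Dm_one]

@[simp] lemma unit_conj (u : Rˣ) (x : R) : (u:R) * x * ((u⁻¹:Rˣ):R) = x := by
  rw [mul_comm (u:R) x, mul_assoc, Units.mul_inv, mul_one]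

lemma key (x : R) (u : Rˣ) :
    Tm R x * Dm u * (Tm R x)⁻¹ * (Dm u)⁻¹ = Tm R (x * (1 - (u:R)^2)) := by
  rw [Tm_inv, Dm_inv]
  apply Subtype.ext
  show (!![1, x; 0, 1] * !![(u:R), 0; 0, _] * !![1, -x; 0, 1] * !![((u⁻¹:Rˣ):R), 0; 0, _]) = _
  ext i j
  fin_cases i <;> fin_cases j <;>
    simp [Tm, Dm, Matrix.mul_apply, Fin.sum_univ_two, unit_conj] <;>
    ring_nf <;> (try simp [unit_conj]) <;> (try ring)

lemma Dm_inj {R : Type*} [CommRing R] : Function.Injective (Dm (R := R)) := by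
  intro u v h
  have : ((Dm u : Matrix.SpecialLinearGroup (Fin 2) R) : Matrix (Fin 2) (Fin 2) R) 0 0
      = ((Dm v : Matrix.SpecialLinearGroup (Fin 2) R) : Matrix (Fin 2) (Fin 2) R) 0 0 := by rw [h]
  simpa [Dm, Units.ext_iff] using this

end Helpers

/-- Proposition 1.8. If the Dedekind domain `D` has characteristic `0`
or infinite unit group, then every finite-index subgroup of `SL₂(D)` has non-zero level. -/
theorem statement2 {D : Type*} [CommRing D] [IsDomain D] [IsDedekindDomain D]
    (hD : CharZero D ∨ Infinite Dˣ)
    (H : Subgroup (Matrix.SpecialLinearGroup (Fin 2) D)) (hH : H.FiniteIndex) :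
    ∃ q : Ideal D, q ≠ ⊥ ∧ ∀ r ∈ q, Tm D r ∈ H.normalCore := by
  set N := H.normalCore with hN
  haveI : N.Normal := H.normalCore_normal
  haveI := hH
  haveI : N.FiniteIndex := H.finiteIndex_normalCore
  rcases hD with hchar | hinf
  · refine ⟨Ideal.span {(N.index : D)}, ?_, ?_⟩
    · rw [Ne, Ideal.span_singleton_eq_bot]
      exact_mod_cast Subgroup.FiniteIndex.index_ne_zero (H := N)
    · intro r hr
      rcases Ideal.mem_span_singleton'.mp hr with ⟨x, rfl⟩
      rw [mul_comm, ← Tm_pow]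
      exact N.pow_index_mem _
  · obtain ⟨y, hy⟩ := Finite.exists_infinite_fiber
      (fun u : Dˣ => (QuotientGroup.mk (Dm u) : Matrix.SpecialLinearGroup (Fin 2) D ⧸ N))
    have hS : ((fun u : Dˣ => (QuotientGroup.mk (Dm u) :
        Matrix.SpecialLinearGroup (Fin 2) D ⧸ N)) ⁻¹' {y}).Infinite :=
      Set.infinite_coe_iff.mp hy
    obtain ⟨u₀, hu₀⟩ := hS.nonempty
    obtain ⟨v, hv⟩ := (hS.diff (Set.toFinite {u₀, -u₀})).nonempty
    rcases hv with ⟨hv1, hv2⟩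
    simp only [Set.mem_insert_iff, Set.mem_singleton_iff, not_or] at hv2
    set w : Dˣ := u₀ * v⁻¹ with hw
    have hwN : Dm w ∈ N := by
      have : (QuotientGroup.mk (Dm u₀) : _ ⧸ N) = QuotientGroup.mk (Dm v) := by
        rw [Set.mem_preimage, Set.mem_singleton_iff] at hu₀ hv1
        rw [hu₀, hv1]
      have h2 := (QuotientGroup.eq).mp this.symm
      rw [Dm_inv, Dm_mul] at h2
      have hw' : w = v⁻¹ * u₀ := by rw [hw, mul_comm]
      rw [hw']
      exact h2
    have hw2 : ((w : D))^2 ≠ 1 := by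
      intro h
      have : (w:D) = 1 ∨ (w:D) = -1 := by
        rw [← mul_self_eq_one_iff]; rw [sq] at h; exact h
      rcases this with h1 | h1
      · apply hv2.1
        have : w = 1 := Units.ext h1
        rw [hw] at this
        have := mul_eq_one_iff_eq_inv.mp this
        rw [inv_inv] at this
        exact this.symm ▸ rfl
      · apply hv2.2
        have : w = -1 := Units.ext (by simpa using h1)
        have hv' : u₀ = -v := by
          have := congrArg (· * v) (hw ▸ this : u₀ * v⁻¹ = -1)
          simpa [mul_assoc] using this
        rw [hv']
        simp
    refine ⟨Ideal.span {1 - (w:D)^2}, ?_, ?_⟩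
    · rw [Ne, Ideal.span_singleton_eq_bot, sub_eq_zero]
      exact fun h => hw2 h.symm
    · intro r hr
      rcases Ideal.mem_span_singleton'.mp hr with ⟨x, rfl⟩
      rw [← key x w]
      exact mul_mem (Subgroup.Normal.conj_mem ‹N.Normal› _ hwN (Tm D x)) (inv_mem hwN)
end

section
/- Let D be a Dedekind domain. If NE₂(D) ≠ SL₂(D), then NE₂(D,𝔮) ≠ SL₂(D,𝔮) for every nonzero ideal 𝔮 of D. -/
/-!
Since `D ⧸ 𝔮` is semilocal it has stable rank one, so `SL₂(D ⧸ 𝔮)` is generated by elementary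
matrices, which lift to `SL₂(D)`. Hence `SL₂(D) = E₂(D) · SL₂(D, 𝔮)`. If `NE₂(D, 𝔮) = SL₂(D, 𝔮)`,
both factors lie in `NE₂(D)`, forcing `NE₂(D) = SL₂(D)`.
-/

open Matrix

/-- `NE₂(D,q)`: the normal closure in `SL₂(D)` of the translations `T(x)`, `x ∈ q`. -/
def NE2 (D : Type*) [CommRing D] (q : Ideal D) :
    Subgroup (Matrix.SpecialLinearGroup (Fin 2) D) :=
  Subgroup.normalClosure {x | ∃ r ∈ q, x = Tm D r}

def Lm (R : Type*) [CommRing R] (r : R) : Matrix.SpecialLinearGroup (Fin 2) R :=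
  ⟨!![1, 0; r, 1], by simp [Matrix.det_fin_two_of]⟩

def E2 (R : Type*) [CommRing R] : Subgroup (Matrix.SpecialLinearGroup (Fin 2) R) :=
  Subgroup.closure (Set.range (Tm R) ∪ Set.range (Lm R))

section CommRing

variable {R : Type*} [CommRing R]

@[simp]
lemma coe_Tm (r : R) : (Tm R r : Matrix (Fin 2) (Fin 2) R) = !![1, r; 0, 1] := rfl

@[simp]
lemma coe_Lm (r : R) : (Lm R r : Matrix (Fin 2) (Fin 2) R) = !![1, 0; r, 1] := rfl

lemma Tm_mem_E2 (r : R) : Tm R r ∈ E2 R :=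
  Subgroup.subset_closure (Or.inl ⟨r, rfl⟩)

lemma Lm_mem_E2 (r : R) : Lm R r ∈ E2 R :=
  Subgroup.subset_closure (Or.inr ⟨r, rfl⟩)

lemma Tm_mem_NE2_top (r : R) : Tm R r ∈ NE2 R ⊤ :=
  Subgroup.subset_normalClosure ⟨r, trivial, rfl⟩

lemma Lm_mem_NE2_top (r : R) : Lm R r ∈ NE2 R ⊤ := by
  set w := Tm R 1 * Lm R (-1) * Tm R 1
  have hconj : w * Tm R (-r) = Lm R r * w := by
    ext i j
    fin_cases i <;> fin_cases j <;> simp [w, mul_apply, Fin.sum_univ_succ]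
  rw [← mul_inv_cancel_right (Lm R r) w, ← hconj]
  exact Subgroup.normalClosure_normal.conj_mem _ (Tm_mem_NE2_top _) _

lemma E2_le_NE2_top : E2 R ≤ NE2 R ⊤ :=
  (Subgroup.closure_le _).2 <| Set.union_subset
    (Set.range_subset_iff.2 Tm_mem_NE2_top) (Set.range_subset_iff.2 Lm_mem_NE2_top)

lemma NE2_le_NE2_top (q : Ideal R) : NE2 R q ≤ NE2 R ⊤ :=
  Subgroup.normalClosure_mono fun _ ⟨r, _, hx⟩ ↦ ⟨r, trivial, hx⟩

lemma eq_Tm_of_first_column (Y : Matrix.SpecialLinearGroup (Fin 2) R) (h00 : Y 0 0 = 1)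
    (h10 : Y 1 0 = 0) : Y = Tm R (Y 0 1) := by
  have h11 : Y 1 1 = 1 := by
    have hdet := Y.det_coe
    rwa [det_fin_two, h00, h10, mul_zero, sub_zero, one_mul] at hdet
  ext i j
  fin_cases i <;> fin_cases j <;> simp [Tm, h00, h10, h11]

lemma mem_E2_of_isUnit (Y : Matrix.SpecialLinearGroup (Fin 2) R) (t : R)
    (h : IsUnit (Y 0 0 + t * Y 1 0)) : Y ∈ E2 R := by
  obtain ⟨u, hu⟩ := h.exists_left_inv
  -- With `a' := Y 0 0 + t * Y 1 0 = u⁻¹` and `c := Y 1 0`, the factors of `P` move the first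
  -- column of `Y` through `(a', c)`, `(a', 1)`, `(1, 1)` to `(1, 0)`.
  set P := Lm R (-1) * Tm R (1 - (Y 0 0 + t * Y 1 0)) * Lm R (u * (1 - Y 1 0)) * Tm R t
  have hP : P ∈ E2 R :=
    mul_mem (mul_mem (mul_mem (Lm_mem_E2 _) (Tm_mem_E2 _)) (Lm_mem_E2 _)) (Tm_mem_E2 _)
  have h00 : (P * Y) 0 0 = 1 := by
    simp [P, mul_apply, Fin.sum_univ_succ]
    linear_combination ((1 - (Y 0 0 + t * Y 1 0)) * (1 - Y 1 0)) * hu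
  have h10 : (P * Y) 1 0 = 0 := by
    simp [P, mul_apply, Fin.sum_univ_succ]
    linear_combination ((1 - Y 1 0) * (Y 0 0 + t * Y 1 0)) * hu
  rw [← inv_mul_cancel_left P Y, eq_Tm_of_first_column _ h00 h10]
  exact mul_mem (inv_mem hP) (Tm_mem_E2 _)

lemma map_Tm {S : Type*} [CommRing S] (f : R →+* S) (r : R) :
    SpecialLinearGroup.map f (Tm R r) = Tm S (f r) := by
  ext i j
  fin_cases i <;> fin_cases j <;> simp

lemma map_Lm {S : Type*} [CommRing S] (f : R →+* S) (r : R) :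
    SpecialLinearGroup.map f (Lm R r) = Lm S (f r) := by
  ext i j
  fin_cases i <;> fin_cases j <;> simp

lemma map_E2 {S : Type*} [CommRing S] {f : R →+* S} (hf : Function.Surjective f) :
    (E2 R).map (SpecialLinearGroup.map f) = E2 S := by
  rw [E2, MonoidHom.map_closure, Set.image_union, ← Set.range_comp, ← Set.range_comp]
  congr 2 <;> ext <;> simp [map_Tm, map_Lm, hf.exists]

lemma E2_sup_SLmod_eq_top (q : Ideal R) (h : E2 (R ⧸ q) = ⊤) : E2 R ⊔ SLmod R q = ⊤ := by
  rw [SLmod, ← Subgroup.comap_map_eq, map_E2 Ideal.Quotient.mk_surjective, h,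
    Subgroup.comap_top]

/-- Semilocal rings have stable rank one: by the Chinese remainder theorem pick `t ≡ 1` modulo
the maximal ideals containing `a` and `t ≡ 0` modulo the others. -/
lemma exists_isUnit_add_mul_of_isCoprime [Finite (MaximalSpectrum R)] {a c : R}
    (h : IsCoprime a c) : ∃ t, IsUnit (a + t * c) := by
  classical
  have hcop : Pairwise fun m n : MaximalSpectrum R ↦ IsCoprime m.asIdeal n.asIdeal :=
    fun m n hmn ↦ Ideal.isCoprime_of_isMaximal (mt MaximalSpectrum.ext hmn)
  obtain ⟨t, ht⟩ := Ideal.exists_forall_sub_mem_ideal hcop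
    fun m ↦ if a ∈ m.asIdeal then 1 else 0
  refine ⟨t, of_not_not fun hnu ↦ ?_⟩
  obtain ⟨m, hm, hmem⟩ := exists_max_ideal_of_mem_nonunits hnu
  obtain ⟨x, y, hxy⟩ := h
  specialize ht ⟨m, hm⟩
  by_cases ha : a ∈ m
  · simp only [ha, if_true] at ht
    have hc : c ∈ m := by
      rw [show c = a + t * c - a - (t - 1) * c by ring]
      exact m.sub_mem (m.sub_mem hmem ha) (m.mul_mem_right c ht)
    refine hm.ne_top ((m.eq_top_iff_one).2 ?_)
    rw [← hxy]
    exact m.add_mem (m.mul_mem_left x ha) (m.mul_mem_left y hc)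
  · simp only [ha, if_false, sub_zero] at ht
    refine ha ?_
    rw [show a = a + t * c - t * c by ring]
    exact m.sub_mem hmem (m.mul_mem_right c ht)

lemma E2_eq_top_of_finite_maximalSpectrum [Finite (MaximalSpectrum R)] : E2 R = ⊤ := by
  refine eq_top_iff.2 fun Y _ ↦ ?_
  have hcop : IsCoprime (Y 0 0) (Y 1 0) := ⟨Y 1 1, -Y 0 1, by
    have hdet := Y.det_coe
    rw [det_fin_two] at hdet
    linear_combination hdet⟩
  obtain ⟨t, ht⟩ := exists_isUnit_add_mul_of_isCoprime hcop
  exact mem_E2_of_isUnit Y t ht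

end CommRing

lemma finite_maximalSpectrum_quotient {D : Type*} [CommRing D] [IsNoetherianRing D]
    [Ring.DimensionLEOne D] {q : Ideal D} (hq : q ≠ ⊥) : Finite (MaximalSpectrum (D ⧸ q)) := by
  have : Ring.KrullDimLE 0 (D ⧸ q) :=
    Ideal.krullDimLE_zero_quotient_iff_forall_minimalPrimes_isMaximal.2 fun p hp ↦
      hp.1.1.isMaximal (ne_bot_of_le_ne_bot hq hp.1.2)
  have : IsArtinianRing (D ⧸ q) := IsNoetherianRing.isArtinianRing_of_krullDimLE_zero
  infer_instance

theorem statement4_general {D : Type*} [CommRing D] [IsDedekindDomain D]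
    (h : NE2 D ⊤ ≠ ⊤) :
    ∀ q : Ideal D, q ≠ ⊥ → NE2 D q ≠ SLmod D q := by
  intro q hq hNE
  have := finite_maximalSpectrum_quotient hq
  apply h
  rw [eq_top_iff, ← E2_sup_SLmod_eq_top q E2_eq_top_of_finite_maximalSpectrum, ← hNE]
  exact sup_le E2_le_NE2_top (NE2_le_NE2_top q)

/-- Lemma 1.11. If `NE₂(D) ≠ SL₂(D)`, then `NE₂(D,q) ≠ SL₂(D,q)` for
every nonzero ideal `q` of `D`. -/
theorem statement4 {D : Type*} [CommRing D] [IsDomain D] [IsDedekindDomain D]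
    (h : NE2 D ⊤ ≠ ⊤) :
    ∀ q : Ideal D, q ≠ ⊥ → NE2 D q ≠ SLmod D q :=
  statement4_general h
end

section
/- Let D be a Dedekind domain and H a congruence subgroup of SL₂(D). Then there exists g₀ ∈ SL₂(D) such that c(H,g) ⊆ c(H,g₀) for every g ∈ SL₂(D); consequently the ideal-theoretic sum Σ_{g ∈ SL₂(D)} c(H,g) of all cusp amplitudes of H equals c(H,g₀), and is itself a cusp amplitude of H. -/
/-!
Every cusp amplitude of `H` contains any `q ≠ 0` with `SL₂(D, q) ≤ H`, so there are only
finitely many of them, and some `c(H, g₀)` is maximal among them. It is the largest because the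
cusp amplitudes are directed: given `g₁, g₂`, split `q = q₁ q₂` into coprime parts according to
which of `c(H, g₁)`, `c(H, g₂)` is larger at each prime, and find `g ∈ SL₂(D)` whose first
column agrees with that of `g₁` modulo `q₁` and with that of `g₂` modulo `q₂`. Modulo `q`, the
matrix `g T(x) g⁻¹` only depends on `x` times the first column of `g`, and this gives
`c(H, g₁) + c(H, g₂) ⊆ c(H, g)`.
-/

open Matrix

/-- `c` is the cusp amplitude `c(H,g)` of `H` at `g`: the largest ideal contained in the
quasi-amplitude `b(H,g) = {x | g · T(x) · g⁻¹ ∈ H}`. -/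
def IsCuspAmplitude {R : Type*} [CommRing R]
    (H : Subgroup (Matrix.SpecialLinearGroup (Fin 2) R))
    (g : Matrix.SpecialLinearGroup (Fin 2) R) (c : Ideal R) : Prop :=
  (∀ x ∈ c, g * Tm R x * g⁻¹ ∈ H) ∧
    ∀ I : Ideal R, (∀ x ∈ I, g * Tm R x * g⁻¹ ∈ H) → I ≤ c

open scoped MatrixGroups

section CommRing

variable {R : Type*} [CommRing R]

theorem Tm_add (x y : R) : Tm R (x + y) = Tm R x * Tm R y := by
  refine Subtype.ext ?_
  rw [Matrix.SpecialLinearGroup.coe_mul]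
  ext i j
  fin_cases i <;> fin_cases j <;> simp [Tm, Matrix.mul_apply, add_comm]

theorem coe_conj_Tm (g : SL(2, R)) (x : R) :
    (↑(g * Tm R x * g⁻¹) : Matrix (Fin 2) (Fin 2) R) =
      !![1 - x * g 0 0 * g 1 0, x * g 0 0 ^ 2; -(x * g 1 0 ^ 2), 1 + x * g 0 0 * g 1 0] := by
  have hdet : g 0 0 * g 1 1 - g 0 1 * g 1 0 = 1 := by
    rw [← Matrix.det_fin_two]; exact g.2
  rw [Matrix.SpecialLinearGroup.coe_mul, Matrix.SpecialLinearGroup.coe_mul,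
    Matrix.SpecialLinearGroup.coe_inv, adjugate_fin_two]
  ext i j
  fin_cases i <;> fin_cases j <;>
    simp only [Tm, Fin.isValue, Fin.zero_eta, Fin.mk_one, Matrix.mul_apply, of_apply, cons_val',
      cons_val_fin_one, Fin.sum_univ_two, cons_val_zero, cons_val_one, mul_one, mul_zero, add_zero,
      mul_neg] <;>
    first | ring1 | linear_combination hdet

theorem isCoprime_apply_zero_zero_apply_one_zero (g : SL(2, R)) :
    IsCoprime (g 0 0) (g 1 0) :=
  ⟨g 1 1, -g 0 1, by
    linear_combination (Matrix.det_fin_two (g : Matrix (Fin 2) (Fin 2) R)).symm.trans g.2⟩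

theorem exists_SL_apply_zero_eq {A C : R} (h : IsCoprime A C) :
    ∃ g : SL(2, R), g 0 0 = A ∧ g 1 0 = C := by
  obtain ⟨u, v, huv⟩ := h
  exact ⟨⟨!![A, -v; C, u], by rw [Matrix.det_fin_two_of]; linear_combination huv⟩, rfl, rfl⟩

theorem mul_inv_mem_SLmod {q : Ideal R} {X Y : SL(2, R)}
    (h : ∀ i j, X i j - Y i j ∈ q) : X * Y⁻¹ ∈ SLmod R q := by
  rw [SLmod, MonoidHom.mem_ker, map_mul, map_inv, mul_inv_eq_one]
  ext i j
  exact Ideal.Quotient.mk_eq_mk_iff_sub_mem _ _ |>.mpr (h i j)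

theorem Tm_mem_SLmod {q : Ideal R} {x : R} (hx : x ∈ q) : Tm R x ∈ SLmod R q := by
  simpa using mul_inv_mem_SLmod (q := q) (X := Tm R x) (Y := 1) fun i j => by
    fin_cases i <;> fin_cases j <;> simp [Tm, hx]

theorem conj_Tm_mem_of_sub_mem {H : Subgroup (SL(2, R))} {q : Ideal R}
    (hqH : SLmod R q ≤ H) {g g' : SL(2, R)} {x : R}
    (ha : x * (g 0 0 - g' 0 0) ∈ q) (hc : x * (g 1 0 - g' 1 0) ∈ q)
    (h : g' * Tm R x * g'⁻¹ ∈ H) : g * Tm R x * g⁻¹ ∈ H := by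
  have hdiag : x * g 0 0 * g 1 0 - x * g' 0 0 * g' 1 0 ∈ q := by
    have : x * g 0 0 * g 1 0 - x * g' 0 0 * g' 1 0 =
        x * (g 0 0 - g' 0 0) * g 1 0 + g' 0 0 * (x * (g 1 0 - g' 1 0)) := by ring
    rw [this]; exact q.add_mem (q.mul_mem_right _ ha) (q.mul_mem_left _ hc)
  have hmod : (g * Tm R x * g⁻¹) * (g' * Tm R x * g'⁻¹)⁻¹ ∈ SLmod R q := by
    refine mul_inv_mem_SLmod fun i j => ?_
    rw [coe_conj_Tm, coe_conj_Tm]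
    fin_cases i <;> fin_cases j <;> simp only [Fin.zero_eta, Fin.mk_one, of_apply, cons_val',
      cons_val_zero, cons_val_one, empty_val', cons_val_fin_one]
    · convert q.neg_mem hdiag using 1; ring
    · convert q.mul_mem_right (g 0 0 + g' 0 0) ha using 1; ring
    · convert q.mul_mem_right (-(g 1 0 + g' 1 0)) hc using 1; ring
    · convert hdiag using 1; ring
  simpa only [inv_mul_cancel_right] using H.mul_mem (hqH hmod) h

theorem Ideal.exists_sub_mem_and_sub_mem {I J : Ideal R}
    (h : IsCoprime I J) (x y : R) : ∃ r, r - x ∈ I ∧ r - y ∈ J := by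
  obtain ⟨i, hi, j, hj, hij⟩ := Ideal.isCoprime_iff_exists.mp h
  refine ⟨y * i + x * j, ?_, ?_⟩
  · convert I.mul_mem_left (y - x) hi using 1; linear_combination x * hij
  · convert J.mul_mem_left (x - y) hj using 1; linear_combination y * hij

theorem Ideal.IsMaximal.isCoprime_of_not_le {p I : Ideal R}
    (hp : p.IsMaximal) (h : ¬I ≤ p) : IsCoprime p I :=
  Ideal.isCoprime_iff_sup_eq.mpr <|
    (hp.out.le_iff.mp le_sup_left).resolve_right fun he => h (he ▸ le_sup_right)

theorem isCoprime_span_pair_of_sub_mem {a c a' c' : R} {I : Ideal R} (h : IsCoprime a' c')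
    (ha : a - a' ∈ I) (hc : c - c' ∈ I) : IsCoprime (Ideal.span {a, c}) I := by
  obtain ⟨u, v, huv⟩ := h
  rw [Ideal.isCoprime_iff_sup_eq, Ideal.eq_top_iff_one, Submodule.mem_sup]
  exact ⟨u * a + v * c, Ideal.mem_span_pair.mpr ⟨u, v, rfl⟩, -(u * (a - a') + v * (c - c')),
    I.neg_mem (add_mem (I.mul_mem_left u ha) (I.mul_mem_left v hc)), by linear_combination huv⟩

end CommRing

section Dedekind

open UniqueFactorizationMonoid

variable {D : Type*} [CommRing D] [IsDedekindDomain D]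

theorem Ideal.finite_setOf_le {q : Ideal D} (hq : q ≠ ⊥) : {I : Ideal D | q ≤ I}.Finite := by
  have := fintypeSubtypeDvd q hq
  exact (Set.finite_coe_iff.mp (Finite.of_fintype {I // I ∣ q})).subset
    fun I hI => Ideal.dvd_iff_le.mpr hI

theorem exists_isCoprime_sub_mem {q : Ideal D} (hq : q ≠ ⊥) {A₀ C₀ : D}
    (h : IsCoprime (Ideal.span {A₀, C₀}) q) : ∃ A C, IsCoprime A C ∧ A - A₀ ∈ q ∧ C - C₀ ∈ q := by
  obtain ⟨A, hAq, hA⟩ : ∃ A, A - A₀ ∈ q ∧ A ≠ 0 := by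
    by_cases hA₀ : A₀ = 0
    · obtain ⟨A, hA, hA0⟩ := Submodule.exists_mem_ne_zero_of_ne_bot hq
      exact ⟨A, by simpa [hA₀] using hA, hA0⟩
    · exact ⟨A₀, by simp, hA₀⟩
  -- `C` is chosen to be `1` modulo the finitely many maximal ideals containing `A` but not `q`
  set S := {p : Ideal D | p.IsMaximal ∧ Ideal.span {A} ≤ p ∧ ¬q ≤ p}
  have hS : S.Finite :=
    (Ideal.finite_setOf_le (by simpa using hA)).subset fun p hp => hp.2.1
  obtain ⟨C, hCq, hCS⟩ := Ideal.exists_sub_mem_and_sub_mem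
    (IsCoprime.prod_right fun p hp => ((hS.mem_toFinset.mp hp).1.isCoprime_of_not_le
      (hS.mem_toFinset.mp hp).2.2).symm : IsCoprime q (∏ p ∈ hS.toFinset, p)) C₀ 1
  refine ⟨A, C, ?_, hAq, hCq⟩
  rw [← Ideal.isCoprime_span_singleton_iff, Ideal.isCoprime_iff_sup_eq]
  by_contra hne
  obtain ⟨p, hp, hle⟩ := Ideal.exists_le_maximal _ hne
  have hAp : A ∈ p := (Ideal.span_singleton_le_iff_mem _).mp (le_sup_left.trans hle)
  have hCp : C ∈ p := (Ideal.span_singleton_le_iff_mem _).mp (le_sup_right.trans hle)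
  refine hp.ne_top ?_
  by_cases hqp : q ≤ p
  · have hA₀p : A₀ ∈ p := by simpa using p.sub_mem hAp (hqp hAq)
    have hC₀p : C₀ ∈ p := by simpa using p.sub_mem hCp (hqp hCq)
    rw [eq_top_iff, ← h.sup_eq]
    exact sup_le (Ideal.span_le.mpr (Set.insert_subset_iff.mpr
      ⟨hA₀p, Set.singleton_subset_iff.mpr hC₀p⟩)) hqp
  · have hpS : p ∈ hS.toFinset := hS.mem_toFinset.mpr
      ⟨hp, (Ideal.span_singleton_le_iff_mem _).mpr hAp, hqp⟩
    have hC1p : C - 1 ∈ p := (Ideal.prod_le_inf.trans (Finset.inf_le hpS)) hCS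
    exact (Ideal.eq_top_iff_one _).mpr (by simpa using p.sub_mem hCp hC1p)

theorem exists_SL_sub_mem_of_isCoprime {q₁ q₂ : Ideal D} (hco : IsCoprime q₁ q₂)
    (hq : q₁ * q₂ ≠ ⊥) (g₁ g₂ : SL(2, D)) :
    ∃ g : SL(2, D), (g 0 0 - g₁ 0 0 ∈ q₁ ∧ g 1 0 - g₁ 1 0 ∈ q₁) ∧
      (g 0 0 - g₂ 0 0 ∈ q₂ ∧ g 1 0 - g₂ 1 0 ∈ q₂) := by
  obtain ⟨A₀, hA₁, hA₂⟩ := Ideal.exists_sub_mem_and_sub_mem hco (g₁ 0 0) (g₂ 0 0)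
  obtain ⟨C₀, hC₁, hC₂⟩ := Ideal.exists_sub_mem_and_sub_mem hco (g₁ 1 0) (g₂ 1 0)
  have hunit : IsCoprime (Ideal.span {A₀, C₀}) (q₁ * q₂) :=
    IsCoprime.mul_right
      (isCoprime_span_pair_of_sub_mem (isCoprime_apply_zero_zero_apply_one_zero g₁) hA₁ hC₁)
      (isCoprime_span_pair_of_sub_mem (isCoprime_apply_zero_zero_apply_one_zero g₂) hA₂ hC₂)
  obtain ⟨A, C, hAC, hA, hC⟩ := exists_isCoprime_sub_mem hq hunit
  obtain ⟨g, rfl, rfl⟩ := exists_SL_apply_zero_eq hAC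
  have hsub : ∀ {x y z : D} {I : Ideal D}, x - y ∈ q₁ * q₂ → q₁ * q₂ ≤ I → y - z ∈ I →
      x - z ∈ I := fun hxy hI hyz => by simpa using add_mem (hI hxy) hyz
  exact ⟨g, ⟨hsub hA Ideal.mul_le_left hA₁, hsub hC Ideal.mul_le_left hC₁⟩,
    hsub hA Ideal.mul_le_right hA₂, hsub hC Ideal.mul_le_right hC₂⟩

theorem isCoprime_prod_filter_prod_filter_not {F : Multiset (Ideal D)} (hF : ∀ p ∈ F, Prime p)
    (P : Ideal D → Prop) [DecidablePred P] :
    IsCoprime (F.filter P).prod (F.filter (¬P ·)).prod := by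
  have hmax : ∀ p ∈ F, p.IsMaximal := fun p hp =>
    (Ideal.isPrime_of_prime (hF p hp)).isMaximal (hF p hp).ne_zero
  rw [Ideal.isCoprime_iff_sup_eq]
  refine Ideal.sup_multiset_prod_eq_top fun p' hp' => ?_
  rw [sup_comm]
  refine Ideal.sup_multiset_prod_eq_top fun p hp => ?_
  exact (hmax p' (Multiset.mem_of_mem_filter hp')).coprime_of_ne
    (hmax p (Multiset.mem_of_mem_filter hp))
    fun h => Multiset.of_mem_filter hp' (h ▸ Multiset.of_mem_filter hp)

theorem mul_prod_filter_normalizedFactors_le {q K K' : Ideal D} (hq : q ≠ ⊥) (hK : q ≤ K)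
    (hK' : q ≤ K') (P : Ideal D → Prop) [DecidablePred P]
    (hP : ∀ p, ¬P p →
      (normalizedFactors K').count p ≤ (normalizedFactors K).count p) :
    K * ((normalizedFactors q).filter P).prod ≤ K' := by
  have hne : ∀ {I : Ideal D}, q ≤ I → I ≠ 0 := fun hI h =>
    hq (by rw [← le_bot_iff, ← Submodule.zero_eq_bot, ← h]; exact hI)
  have hprod : ((normalizedFactors q).filter P).prod ≠ 0 := Multiset.prod_ne_zero
    fun h => zero_notMem_normalizedFactors q (Multiset.mem_of_mem_filter h)
  have hK'q : normalizedFactors K' ≤ normalizedFactors q :=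
    (dvd_iff_normalizedFactors_le_normalizedFactors (hne hK') (hne le_rfl)).mp
      (Ideal.dvd_iff_le.mpr hK')
  rw [← Ideal.dvd_iff_le, dvd_iff_normalizedFactors_le_normalizedFactors (hne hK')
      (mul_ne_zero (hne hK) hprod), normalizedFactors_mul (hne hK) hprod,
    normalizedFactors_prod_of_prime fun p hp =>
      prime_of_normalized_factor p (Multiset.mem_of_mem_filter hp),
    Multiset.le_iff_count]
  intro p
  rw [Multiset.count_add, Multiset.count_filter]
  split_ifs with hp
  · exact (Multiset.le_iff_count.mp hK'q p).trans (Nat.le_add_left _ _)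
  · exact hP p hp

theorem exists_isCoprime_mul_eq_and_mul_le {q K₁ K₂ : Ideal D} (hq : q ≠ ⊥) (h₁ : q ≤ K₁)
    (h₂ : q ≤ K₂) :
    ∃ q₁ q₂ : Ideal D, q₁ * q₂ = q ∧ IsCoprime q₁ q₂ ∧ K₁ * q₁ ≤ K₂ ∧ K₂ * q₂ ≤ K₁ := by
  classical
  -- `q₁` is the part of `q` at the primes `𝔭` with `v_𝔭(K₁) ≤ v_𝔭(K₂)`, and `q₂` the rest
  let P : Ideal D → Prop := fun p =>
    (normalizedFactors K₁).count p ≤ (normalizedFactors K₂).count p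
  refine ⟨((normalizedFactors q).filter P).prod, ((normalizedFactors q).filter (¬P ·)).prod,
    ?_, isCoprime_prod_filter_prod_filter_not (fun p hp => prime_of_normalized_factor p hp) P,
    mul_prod_filter_normalizedFactors_le hq h₁ h₂ P fun p hp => (not_le.mp hp).le,
    mul_prod_filter_normalizedFactors_le hq h₂ h₁ _ fun p hp => not_not.mp hp⟩
  rw [← Multiset.prod_add, Multiset.filter_add_not, Ideal.prod_normalizedFactors_eq_self hq]

theorem exists_conj_Tm_mem_of_sup {H : Subgroup SL(2, D)} {q : Ideal D} (hq : q ≠ ⊥)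
    (hqH : SLmod D q ≤ H) {g₁ g₂ : SL(2, D)} {K₁ K₂ : Ideal D} (hK₁ : q ≤ K₁) (hK₂ : q ≤ K₂)
    (h₁ : ∀ x ∈ K₁, g₁ * Tm D x * g₁⁻¹ ∈ H) (h₂ : ∀ x ∈ K₂, g₂ * Tm D x * g₂⁻¹ ∈ H) :
    ∃ g : SL(2, D), ∀ x ∈ K₁ ⊔ K₂, g * Tm D x * g⁻¹ ∈ H := by
  obtain ⟨q₁, q₂, rfl, hco, hq₁, hq₂⟩ := exists_isCoprime_mul_eq_and_mul_le hq hK₁ hK₂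
  obtain ⟨g, ⟨ha₁, hc₁⟩, ha₂, hc₂⟩ := exists_SL_sub_mem_of_isCoprime hco hq g₁ g₂
  obtain ⟨i, hi, j, hj, hij⟩ := Ideal.isCoprime_iff_exists.mp hco
  refine ⟨g, fun x hx => ?_⟩
  -- split `x = x j + x i`: conjugating `T(x j)` by `g` or by `g₁` agrees modulo `q₁ q₂`
  have hxj : x * j ∈ K₁ :=
    (Ideal.sup_mul K₁ K₂ q₂ ▸ sup_le Ideal.mul_le_left hq₂) (Ideal.mul_mem_mul hx hj)
  have hxi : x * i ∈ K₂ :=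
    (Ideal.sup_mul K₁ K₂ q₁ ▸ sup_le hq₁ Ideal.mul_le_left) (Ideal.mul_mem_mul hx hi)
  have hj₁ : ∀ {d}, d ∈ q₁ → x * j * d ∈ q₁ * q₂ := fun {d} hd =>
    mul_assoc x j d ▸ Ideal.mul_mem_left _ x (Ideal.mul_mem_mul_rev hd hj)
  have hi₂ : ∀ {d}, d ∈ q₂ → x * i * d ∈ q₁ * q₂ := fun {d} hd =>
    mul_assoc x i d ▸ Ideal.mul_mem_left _ x (Ideal.mul_mem_mul hi hd)
  have hm₁ := conj_Tm_mem_of_sub_mem hqH (hj₁ ha₁) (hj₁ hc₁) (h₁ _ hxj)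
  have hm₂ := conj_Tm_mem_of_sub_mem hqH (hi₂ ha₂) (hi₂ hc₂) (h₂ _ hxi)
  have hx : x = x * j + x * i := by linear_combination -x * hij
  rw [hx, Tm_add]
  simpa only [mul_assoc, inv_mul_cancel_left] using H.mul_mem hm₁ hm₂

end Dedekind

theorem statement6_general {D : Type*} [CommRing D] [IsDedekindDomain D]
    (H : Subgroup (Matrix.SpecialLinearGroup (Fin 2) D)) (hH : IsCongruence H)
    (c : Matrix.SpecialLinearGroup (Fin 2) D → Ideal D)
    (hc : ∀ g, IsCuspAmplitude H g (c g)) :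
    ∃ g₀ : Matrix.SpecialLinearGroup (Fin 2) D,
      (∀ g, c g ≤ c g₀) ∧ (⨆ g, c g) = c g₀ ∧ IsCuspAmplitude H g₀ (⨆ g, c g) := by
  obtain ⟨q, hq, hqH⟩ := hH
  have hqc : ∀ g, q ≤ c g := fun g => (hc g).2 q fun x hx =>
    hqH ((MonoidHom.normal_ker _).conj_mem _ (Tm_mem_SLmod hx) g)
  have hfin : (Set.range c).Finite :=
    (Ideal.finite_setOf_le hq).subset (Set.range_subset_iff.mpr hqc)
  obtain ⟨_, ⟨g₀, rfl⟩, hmax⟩ := hfin.exists_maximal ⟨c 1, 1, rfl⟩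
  have hle : ∀ g, c g ≤ c g₀ := fun g => by
    obtain ⟨g', hg'⟩ := exists_conj_Tm_mem_of_sup hq hqH (hqc g) (hqc g₀) (hc g).1 (hc g₀).1
    have hsup : c g ⊔ c g₀ ≤ c g' := (hc g').2 _ hg'
    exact le_sup_left.trans (hsup.trans (hmax ⟨g', rfl⟩ (le_sup_right.trans hsup)))
  have hsup : (⨆ g, c g) = c g₀ := le_antisymm (iSup_le hle) (le_iSup c g₀)
  exact ⟨g₀, hle, hsup, hsup ▸ hc g₀⟩

/-- Corollary 2.8. Let `H` be a congruence subgroup of `SL₂(D)` and let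
`c g` denote the cusp amplitude of `H` at `g`. Then there is `g₀` such that `c g ≤ c g₀`
for all `g`; consequently the ideal-theoretic sum of all cusp amplitudes equals `c g₀`,
and is itself a cusp amplitude of `H`. -/
theorem statement6 {D : Type*} [CommRing D] [IsDomain D] [IsDedekindDomain D]
    (H : Subgroup (Matrix.SpecialLinearGroup (Fin 2) D)) (hH : IsCongruence H)
    (c : Matrix.SpecialLinearGroup (Fin 2) D → Ideal D)
    (hc : ∀ g, IsCuspAmplitude H g (c g)) :
    ∃ g₀ : Matrix.SpecialLinearGroup (Fin 2) D,
      (∀ g, c g ≤ c g₀) ∧ (⨆ g, c g) = c g₀ ∧ IsCuspAmplitude H g₀ (⨆ g, c g) :=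
  statement6_general H hH c hc
end
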